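/- Let G be a group such that x ⊗ x = 1_⊗ for all x ∈ G. Assume that (1) for all tensor commuting automorphisms α and β of G, the commutator automorphism α⁻¹β⁻¹αβ is a tensor central automorphism of G, and (2) for every automorphism α of G and every x ∈ G, if α(x) ⊗ x = x ⊗ α(x) then x ⊗ α(x) = 1_⊗. Then the set A^⊗(G) of tensor commuting automorphisms of G is a subgroup of Aut(G). -/

import Mathlib

/-!
Non-abelian tensor square `G ⊗ G`, constructed as the presented group on
symbols `g ⊗ h` with the defining relations
`g*g' ⊗ h = (g^{g'} ⊗ h^{g'}) * (g' ⊗ h)` and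
`g ⊗ h*h' = (g ⊗ h') * (g^{h'} ⊗ h^{h'})`, where `a ^ b = b⁻¹ * a * b`.
-/

variable {G : Type*} [Group G]

/-- Defining relations of the non-abelian tensor square `G ⊗ G`. -/
def tensorRels (G : Type*) [Group G] : Set (FreeGroup (G × G)) :=
  {r | (∃ g g' h : G,
      r = FreeGroup.of (g * g', h) *
        (FreeGroup.of (g'⁻¹ * g * g', g'⁻¹ * h * g') * FreeGroup.of (g', h))⁻¹) ∨
    (∃ g h h' : G,
      r = FreeGroup.of (g, h * h') *
        (FreeGroup.of (g, h') * FreeGroup.of (h'⁻¹ * g * h', h'⁻¹ * h * h'))⁻¹)}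

/-- The non-abelian tensor square `G ⊗ G`. -/
abbrev TensorSquare (G : Type*) [Group G] := PresentedGroup (tensorRels G)

/-- The tensor `g ⊗ h` as an element of `G ⊗ G`. -/
def tmul (g h : G) : TensorSquare G := PresentedGroup.of (g, h)

theorem tensorRels_eq_one {r : FreeGroup (G × G)} (hr : r ∈ tensorRels G) :
    PresentedGroup.mk (tensorRels G) r = 1 :=
  (QuotientGroup.eq_one_iff r).mpr (Subgroup.subset_normalClosure hr)

/-- The first defining relation of `G ⊗ G`. -/
theorem tmul_rel₁ (g g' h : G) :
    tmul (g * g') h = tmul (g'⁻¹ * g * g') (g'⁻¹ * h * g') * tmul g' h := by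
  have h1 := tensorRels_eq_one (G := G) (Or.inl ⟨g, g', h, rfl⟩)
  rw [map_mul, map_inv, map_mul, mul_inv_eq_one] at h1
  exact h1

/-- The second defining relation of `G ⊗ G`. -/
theorem tmul_rel₂ (g h h' : G) :
    tmul g (h * h') = tmul g h' * tmul (h'⁻¹ * g * h') (h'⁻¹ * h * h') := by
  have h1 := tensorRels_eq_one (G := G) (Or.inr ⟨g, h, h', rfl⟩)
  rw [map_mul, map_inv, map_mul, mul_inv_eq_one] at h1
  exact h1

/-- The action of `x : G` on `G ⊗ G`, determined by `(g ⊗ h) ^ x = (x⁻¹*g*x) ⊗ (x⁻¹*h*x)`. -/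
def tensorAct (x : G) : TensorSquare G →* TensorSquare G :=
  PresentedGroup.toGroup
    (f := fun p : G × G => tmul (x⁻¹ * p.1 * x) (x⁻¹ * p.2 * x))
    (by
      rintro r (⟨g, g', h, rfl⟩ | ⟨g, h, h', rfl⟩) <;>
        simp only [map_mul, map_inv, FreeGroup.lift_apply_of, mul_inv_eq_one]
      · have := tmul_rel₁ (x⁻¹ * g * x) (x⁻¹ * g' * x) (x⁻¹ * h * x)
        convert this using 2 <;> group
      · have := tmul_rel₂ (x⁻¹ * g * x) (x⁻¹ * h * x) (x⁻¹ * h' * x)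
        convert this using 2 <;> group)

@[simp] theorem tensorAct_tmul (x g h : G) :
    tensorAct x (tmul g h) = tmul (x⁻¹ * g * x) (x⁻¹ * h * x) :=
  PresentedGroup.toGroup.of _

/-- An automorphism `α` of `G` is tensor commuting if `g ⊗ α g = 1` for all `g`. -/
def IsTensorCommuting (α : G ≃* G) : Prop := ∀ g : G, tmul g (α g) = 1

/-- An automorphism `α` of `G` is tensor central if `[x, α] = x⁻¹ * α x` lies in the
tensor center of `G`, i.e. `(x⁻¹ * α x) ⊗ y = 1` for all `x y`. -/
def IsTensorCentral (α : G ≃* G) : Prop := ∀ x y : G, tmul (x⁻¹ * α x) y = 1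

/-- The inner automorphism `T_g : x ↦ x ^ g = g⁻¹ * x * g` of `G` induced by `g`. -/
def innerAut (g : G) : G ≃* G := MulAut.conj g⁻¹

/-!
Two tensor commuting automorphisms `σ, τ` satisfy `x ⊗ σ(τ x) = σ x ⊗ τ x`: expand
`(τ x · x) ⊗ σ(τ x · x) = 1` with the defining relations; the conjugating elements `x` and `σ x`
commute with every entry, because `a ⊗ b = 1` forces `[a, b] = 1`. By symmetry
`x ⊗ τ(σ x) = τ x ⊗ σ x`, which is `(σ x ⊗ τ x)⁻¹` since `x ⊗ x = 1` makes `⊗` antisymmetric.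
Tensor centrality of `[σ, τ]` identifies `x ⊗ σ(τ x)` with `x ⊗ τ(σ x)`, so `u = x ⊗ σ(τ x)`
satisfies `u = u⁻¹ = σ(τ x) ⊗ x`, and hypothesis (2) gives `u = 1`.
-/

open scoped commutatorElement

def tensorCenter (G : Type*) [Group G] : Set G := {a | ∀ x : G, tmul a x = 1}

def commutatorHom (G : Type*) [Group G] : TensorSquare G →* G :=
  PresentedGroup.toGroup (f := fun p : G × G => ⁅p.1⁻¹, p.2⁻¹⁆)
    (by
      rintro r (⟨g, g', h, rfl⟩ | ⟨g, h, h', rfl⟩) <;>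
        simp only [map_mul, map_inv, FreeGroup.lift_apply_of, mul_inv_eq_one,
          commutatorElement_def] <;>
        group)

theorem commutatorHom_tmul (g h : G) : commutatorHom G (tmul g h) = ⁅g⁻¹, h⁻¹⁆ :=
  PresentedGroup.toGroup.of _

theorem commute_of_tmul_eq_one {a b : G} (h : tmul a b = 1) : Commute a b := by
  rw [← Commute.inv_inv_iff, ← commutatorElement_eq_one_iff_commute, ← commutatorHom_tmul, h,
    map_one]

theorem tensorAct_tmul_of_commute {w a b : G} (ha : Commute w a) (hb : Commute w b) :
    tensorAct w (tmul a b) = tmul a b := by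
  rw [tensorAct_tmul, ha.inv_mul_cancel, hb.inv_mul_cancel]

section TensorMap

variable {H : Type*} [Group H]

def tensorMap (φ : G →* H) : TensorSquare G →* TensorSquare H :=
  PresentedGroup.toGroup (f := fun p : G × G => tmul (φ p.1) (φ p.2))
    (by
      rintro r (⟨g, g', h, rfl⟩ | ⟨g, h, h', rfl⟩) <;>
        simp only [map_mul, map_inv, FreeGroup.lift_apply_of, mul_inv_eq_one]
      · exact tmul_rel₁ (φ g) (φ g') (φ h)
      · exact tmul_rel₂ (φ g) (φ h) (φ h'))

theorem tensorMap_tmul (φ : G →* H) (g h : G) : tensorMap φ (tmul g h) = tmul (φ g) (φ h) :=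
  PresentedGroup.toGroup.of _

theorem map_mem_tensorCenter (φ : G ≃* H) {a : G} (ha : a ∈ tensorCenter G) :
    φ a ∈ tensorCenter H := fun y => by
  simpa [tensorMap_tmul] using congrArg (tensorMap (φ : G →* H)) (ha (φ.symm y))

end TensorMap

section Antisymmetry

variable (hsq : ∀ x : G, tmul x x = 1)
include hsq

theorem tmul_mul_tmul_swap (a b : G) : tmul a b * tmul b a = 1 := by
  -- expand `a' b ⊗ a' b = 1`, where `a'` is chosen so that `a' ^ b = a`
  set a' := b * a * b⁻¹
  have ha' : b⁻¹ * a' * b = a := by simp [a', mul_assoc]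
  have e₁ : tmul a (a * b) = tmul a b := by rw [tmul_rel₂, hsq, mul_one]
  have e₂ : tmul b (a' * b) = tmul b a := by
    rw [tmul_rel₂, hsq, one_mul, inv_mul_cancel, one_mul, ha']
  calc tmul a b * tmul b a
      = tmul (b⁻¹ * a' * b) (b⁻¹ * (a' * b) * b) * tmul b (a' * b) := by
        rw [e₂, ha', show b⁻¹ * (a' * b) * b = a * b by simp [a', mul_assoc], e₁]
    _ = tmul (a' * b) (a' * b) := (tmul_rel₁ _ _ _).symm
    _ = 1 := hsq _

theorem tmul_swap (a b : G) : tmul b a = (tmul a b)⁻¹ :=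
  eq_inv_of_mul_eq_one_right (tmul_mul_tmul_swap hsq a b)

theorem tmul_swap_eq_one {a b : G} (h : tmul a b = 1) : tmul b a = 1 := by
  rw [tmul_swap hsq, h, inv_one]

theorem tmul_mul_of_mem_tensorCenter {ω : G} (hω : ω ∈ tensorCenter G) (a b : G) :
    tmul a (b * ω) = tmul a b := by
  rw [tmul_rel₂, tmul_swap_eq_one hsq (hω a), one_mul,
    (commute_of_tmul_eq_one (hω a)).inv_mul_cancel,
    (commute_of_tmul_eq_one (hω b)).inv_mul_cancel]

end Antisymmetry

variable {σ τ : G ≃* G}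

theorem IsTensorCentral.tmul_apply_apply_swap (hsq : ∀ x : G, tmul x x = 1)
    (hc : IsTensorCentral (σ⁻¹ * τ⁻¹ * σ * τ)) (x : G) :
    tmul x (σ (τ x)) = tmul x (τ (σ x)) := by
  have hω := map_mem_tensorCenter (τ * σ) (hc x)
  have hdecomp : σ (τ x) = τ (σ x) * (τ * σ) (x⁻¹ * (σ⁻¹ * τ⁻¹ * σ * τ) x) := by
    simp [MulAut.mul_apply]
  rw [hdecomp, tmul_mul_of_mem_tensorCenter hsq hω]

namespace IsTensorCommuting

theorem commute (hσ : IsTensorCommuting σ) (x : G) : Commute x (σ x) :=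
  commute_of_tmul_eq_one (hσ x)

theorem inv (hsq : ∀ x : G, tmul x x = 1) (hσ : IsTensorCommuting σ) :
    IsTensorCommuting σ⁻¹ := fun x => by
  simpa using tmul_swap_eq_one hsq (hσ (σ⁻¹ x))

theorem tensorAct_tmul_mul_tensorAct_tmul (hσ : IsTensorCommuting σ) (g h : G) :
    tensorAct h (tmul g (σ h)) * tensorAct (σ h) (tmul h (σ g)) = 1 := by
  have e₁ : tensorAct h (tmul g (σ h)) = tmul (g * h) (σ h) := by
    rw [tensorAct_tmul, tmul_rel₁ g h, hσ h, mul_one]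
  have e₂ : tmul h (σ g) = tmul (g * h) (σ g) := by
    rw [tmul_rel₁, ← tensorAct_tmul, hσ g, map_one, one_mul]
  rw [e₁, e₂, tensorAct_tmul, ← tmul_rel₂, ← map_mul, hσ]

theorem tmul_apply_apply (hsq : ∀ x : G, tmul x x = 1) (hσ : IsTensorCommuting σ)
    (hτ : IsTensorCommuting τ) (x : G) : tmul x (σ (τ x)) = tmul (σ x) (τ x) := by
  have h := hσ.tensorAct_tmul_mul_tensorAct_tmul (τ x) x
  rw [tensorAct_tmul_of_commute (hτ.commute x) (hσ.commute x),
    tensorAct_tmul_of_commute (hσ.commute x).symm ((hτ.commute x).map σ)] at h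
  rw [eq_inv_of_mul_eq_one_right h, tmul_swap hsq (σ x), inv_inv]

theorem tmul_mul_apply_swap (hsq : ∀ x : G, tmul x x = 1) (hσ : IsTensorCommuting σ)
    (hτ : IsTensorCommuting τ) (hc : IsTensorCentral (σ⁻¹ * τ⁻¹ * σ * τ)) (x : G) :
    tmul ((σ * τ) x) x = tmul x ((σ * τ) x) := by
  rw [MulAut.mul_apply, tmul_swap hsq x]
  calc (tmul x (σ (τ x)))⁻¹
      = (tmul (σ x) (τ x))⁻¹ := by rw [hσ.tmul_apply_apply hsq hτ]
    _ = tmul (τ x) (σ x) := (tmul_swap hsq _ _).symm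
    _ = tmul x (τ (σ x)) := (hτ.tmul_apply_apply hsq hσ x).symm
    _ = tmul x (σ (τ x)) := (hc.tmul_apply_apply_swap hsq x).symm

end IsTensorCommuting

/-- Suppose `x ⊗ x = 1` for all `x ∈ G`, every commutator of two tensor commuting
automorphisms is tensor central, and for every automorphism `α` and `x ∈ G`,
`α x ⊗ x = x ⊗ α x` implies `x ⊗ α x = 1`. Then the set of tensor commuting
automorphisms of `G` is a subgroup of `Aut G`. -/
theorem stmt_16 (G : Type*) [Group G] (hsq : ∀ x : G, tmul x x = 1)
    (h1 : ∀ α β : G ≃* G, IsTensorCommuting α → IsTensorCommuting β →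
      IsTensorCentral (α⁻¹ * β⁻¹ * α * β))
    (h2 : ∀ (α : G ≃* G) (x : G), tmul (α x) x = tmul x (α x) → tmul x (α x) = 1) :
    ∃ S : Subgroup (G ≃* G), (S : Set (G ≃* G)) = {α : G ≃* G | IsTensorCommuting α} :=
  ⟨{ carrier := {α | IsTensorCommuting α}
     one_mem' := hsq
     mul_mem' := fun {σ τ} hσ hτ x =>
       h2 _ x (hσ.tmul_mul_apply_swap hsq hτ (h1 σ τ hσ hτ) x)
     inv_mem' := fun hσ => hσ.inv hsq }, rfl⟩
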